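/- With d_k(u,v,n) denoting the number of colored partitions counted by D(u,v,n) whose largest part is at most k (in the colored ordering), the recurrence d_{(2k+1)_{ab}}(u,v,n) = d_{(2k)_b}(u,v,n) + d_{(2k−1)_a}(u−1, v−1, n−2k−1) holds for all u,v ∈ ℕ and k,n ≥ 1. -/

import Mathlib

/-- The five colours a, b, ab, a², b². -/
inductive Col where
  | a | b | ab | aa | bb
deriving DecidableEq, Inhabited

open Col

/-- Position of a coloured integer in the ordering
1_{ab} < 1_a < 1_{b²} < 1_b < 2_{ab} < 2_a < 3_{a²} < 2_b < 3_{ab} < ⋯ . -/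
def colPos : ℕ × Col → ℕ
  | (k, Col.ab) => 4 * k - 4
  | (k, Col.a)  => 4 * k - 3
  | (k, Col.bb) => 4 * k - 2
  | (k, Col.b)  => 4 * k - 1
  | (k, Col.aa) => 4 * k - 6

/-- Entry of the matrix A: minimal gap below a part of size `k` and colour `x`,
above a part of colour `y`. -/
def colMinGap (k : ℕ) (x y : Col) : ℕ :=
  match x, y with
  | Col.a, y => if k % 2 = 1 then
      (match y with | Col.ab => 1 | _ => 2)
    else
      (match y with | Col.aa => 3 | Col.bb => 3 | _ => 2)
  | Col.bb, y => (match y with | Col.b => 3 | Col.bb => 4 | _ => 2)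
  | Col.b, y => if k % 2 = 1 then
      (match y with | Col.a => 1 | Col.ab => 1 | _ => 2)
    else
      (match y with | Col.a => 1 | Col.ab => 1 | Col.aa => 1 | Col.bb => 3 | _ => 2)
  | Col.ab, y => if k % 2 = 0 then
      (match y with | Col.aa => 3 | Col.bb => 3 | _ => 2)
    else
      (match y with | Col.b => 3 | Col.bb => 3 | _ => 2)
  | Col.aa, y => (match y with | Col.aa => 4 | Col.bb => 4 | _ => 3)

/-- A coloured partition as in the non-dilated Siladić theorem: parts are coloured
positive integers, squared colours only occur on odd integers, there is no part
1_{ab} or 1_{b²}, and consecutive parts satisfy the gap conditions of matrix A. -/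
def IsColPartition (l : List (ℕ × Col)) : Prop :=
  (∀ p ∈ l, 1 ≤ p.1 ∧ ((p.2 = Col.aa ∨ p.2 = Col.bb) → p.1 % 2 = 1) ∧
    p ≠ (1, Col.ab) ∧ p ≠ (1, Col.bb)) ∧
  ∀ i, i + 1 < l.length →
    l[i]!.1 ≥ l[i+1]!.1 + colMinGap l[i]!.1 l[i]!.2 l[i+1]!.2

/-- Number of parts coloured a or ab, plus twice the number of parts coloured a². -/
def aCt (l : List (ℕ × Col)) : ℕ :=
  (l.countP fun p => p.2 == Col.a || p.2 == Col.ab) +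
    2 * (l.countP fun p => p.2 == Col.aa)

/-- Number of parts coloured b or ab, plus twice the number of parts coloured b². -/
def bCt (l : List (ℕ × Col)) : ℕ :=
  (l.countP fun p => p.2 == Col.b || p.2 == Col.ab) +
    2 * (l.countP fun p => p.2 == Col.bb)

/-- D(u,v,n): coloured partitions of n with a-count u and b-count v. -/
noncomputable def Dct (u v n : ℕ) : ℕ :=
  Nat.card {l : List (ℕ × Col) // IsColPartition l ∧
    (l.map Prod.fst).sum = n ∧ aCt l = u ∧ bCt l = v}

/-- d_K(u,v,n): as D(u,v,n) but with largest part at most K in the coloured order;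
integer arguments (negative values give 0). -/
noncomputable def dct (K : ℕ × Col) (u v n : ℤ) : ℕ :=
  Nat.card {l : List (ℕ × Col) // IsColPartition l ∧
    (∀ p ∈ l, colPos p ≤ colPos K) ∧
    ((l.map Prod.fst).sum : ℤ) = n ∧ (aCt l : ℤ) = u ∧ (bCt l : ℤ) = v}

/-- e_K(u,v,n): as d_K(u,v,n) but with largest part exactly K. -/
noncomputable def ect (K : ℕ × Col) (u v n : ℤ) : ℕ :=
  Nat.card {l : List (ℕ × Col) // IsColPartition l ∧
    (∀ p ∈ l, colPos p ≤ colPos K) ∧ l ≠ [] ∧ l.head! = K ∧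
    ((l.map Prod.fst).sum : ℤ) = n ∧ (aCt l : ℤ) = u ∧ (bCt l : ℤ) = v}

/-- The generating function G_K(a,b,q) = 1 + ∑_{u,v≥0,n≥1} d_K(u,v,n) aᵘbᵛqⁿ,
as a formal power series in the variables a = X 0, b = X 1, q = X 2. -/
noncomputable def Gf (K : ℕ × Col) : MvPowerSeries (Fin 3) ℚ :=
  fun e => (dct K (e 0) (e 1) (e 2) : ℚ)

/-!
A partition counted by `d_{(2k+1)_{ab}}` either has its largest part strictly below
`(2k+1)_{ab}` in the coloured order, hence (`colPos` being injective on admissible parts)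
at most `(2k)_b`, or it starts with `(2k+1)_{ab}`. Deleting that part is a bijection onto the
partitions counted by `d_{(2k-1)_a}(u-1, v-1, n-2k-1)`: since the parts of a partition strictly
decrease in the coloured order, only the gap to the next part matters, and for odd `ab` the row
of `A` says that `y` may follow `(2k+1)_{ab}` exactly when `y ≤ (2k-1)_a`.
-/

instance : Fintype Col :=
  ⟨{a, b, ab, aa, bb}, fun x => by cases x <;> decide⟩

def IsColPart (p : ℕ × Col) : Prop :=
  1 ≤ p.1 ∧ ((p.2 = Col.aa ∨ p.2 = Col.bb) → p.1 % 2 = 1) ∧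
    p ≠ (1, Col.ab) ∧ p ≠ (1, Col.bb)

theorem isColPart_ab {m : ℕ} (hm : 2 ≤ m) : IsColPart (m, Col.ab) :=
  ⟨by omega, by simp, by simp only [ne_eq, Prod.mk.injEq, and_true]; omega, by simp⟩

theorem isColPartition_cons_iff {x : ℕ × Col} {t : List (ℕ × Col)} :
    IsColPartition (x :: t) ↔
      IsColPart x ∧ (∀ y ∈ t.head?, y.1 + colMinGap x.1 x.2 y.2 ≤ x.1) ∧
        IsColPartition t := by
  cases t with
  | nil => simp [IsColPartition, IsColPart]
  | cons y s =>
    simp only [IsColPartition, IsColPart, List.forall_mem_cons, List.head?_cons, Option.mem_def,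
      Option.some.injEq, forall_eq', List.length_cons]
    constructor
    · rintro ⟨⟨hx, hys⟩, hgap⟩
      refine ⟨hx, by simpa using hgap 0 (by omega), hys, fun i hi => ?_⟩
      simpa using hgap (i + 1) (by omega)
    · rintro ⟨hx, hxy, hys, hgap⟩
      refine ⟨⟨hx, hys⟩, fun i hi => ?_⟩
      cases i with
      | zero => simpa using hxy
      | succ i => simpa using hgap i (by omega)

theorem one_le_colMinGap (m : ℕ) (x y : Col) : 1 ≤ colMinGap m x y := by
  cases x <;> cases y <;> unfold colMinGap <;> split_ifs <;> decide

theorem three_le_colMinGap_aa (m : ℕ) (y : Col) : 3 ≤ colMinGap m Col.aa y := by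
  cases y <;> exact Nat.le_of_ble_eq_true rfl

theorem colMinGap_ab_of_odd {m : ℕ} (hm : m % 2 = 1) (y : Col) :
    colMinGap m Col.ab y = if y = Col.b ∨ y = Col.bb then 3 else 2 := by
  cases y <;> unfold colMinGap <;> simp [hm]

theorem colPos_lt_of_gap {x y : ℕ × Col} (hy : 1 ≤ y.1)
    (hgap : y.1 + colMinGap x.1 x.2 y.2 ≤ x.1) : colPos y < colPos x := by
  obtain ⟨m, c⟩ := x
  obtain ⟨m', c'⟩ := y
  have := one_le_colMinGap m c c'
  have := three_le_colMinGap_aa m c'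
  cases c <;> cases c' <;> simp only [colPos] at hgap hy ⊢ <;> omega

-- The only clash of residues mod 4, between `(m + 1, aa)` and `(m, bb)`, is excluded by parity.
theorem colPos_injOn : Set.InjOn colPos {p | IsColPart p} := by
  rintro ⟨m, c⟩ ⟨hm, hc, hab, hbb⟩ ⟨m', c'⟩ ⟨hm', hc', hab', hbb'⟩ h
  cases c <;> cases c' <;> simp_all [colPos] <;> omega

theorem IsColPartition.colPos_lt_of_mem {x : ℕ × Col} {t : List (ℕ × Col)}
    (h : IsColPartition (x :: t)) : ∀ p ∈ t, colPos p < colPos x := by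
  induction t generalizing x with
  | nil => simp
  | cons y s ih =>
    obtain ⟨-, hxy, hys⟩ := isColPartition_cons_iff.1 h
    have hy : colPos y < colPos x :=
      colPos_lt_of_gap (isColPartition_cons_iff.1 hys).1.1 (hxy y rfl)
    rintro p (_ | ⟨_, hp⟩)
    · exact hy
    · exact (ih hys p hp).trans hy

theorem add_colMinGap_odd_ab_le_iff {k : ℕ} (hk : 1 ≤ k) {y : ℕ × Col} (hy : 1 ≤ y.1) :
    y.1 + colMinGap (2 * k + 1) Col.ab y.2 ≤ 2 * k + 1 ↔
      colPos y ≤ colPos (2 * k - 1, Col.a) := by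
  obtain ⟨m, c⟩ := y
  rw [colMinGap_ab_of_odd (by omega)]
  cases c <;>
    simp only [colPos, reduceCtorEq, or_self, or_false, or_true, ↓reduceIte] at hy ⊢ <;> omega

theorem isColPartition_cons_odd_ab_iff {k : ℕ} (hk : 1 ≤ k) {t : List (ℕ × Col)}
    (ht : IsColPartition t) :
    IsColPartition ((2 * k + 1, Col.ab) :: t) ↔
      ∀ p ∈ t, colPos p ≤ colPos (2 * k - 1, Col.a) := by
  have hpart := isColPart_ab (m := 2 * k + 1) (by omega)
  rw [isColPartition_cons_iff]
  cases t with
  | nil => simpa using ⟨hpart, ht⟩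
  | cons y s =>
    have hy : 1 ≤ y.1 := (isColPartition_cons_iff.1 ht).1.1
    simp only [hpart, ht, List.head?_cons, Option.mem_def, Option.some.injEq, forall_eq',
      add_colMinGap_odd_ab_le_iff hk hy, List.forall_mem_cons, true_and, and_true]
    exact ⟨fun hy' => ⟨hy', fun p hp => ((ht.colPos_lt_of_mem p hp).trans_le hy').le⟩,
      And.left⟩

theorem aCt_cons_ab (m : ℕ) (t : List (ℕ × Col)) : aCt ((m, Col.ab) :: t) = aCt t + 1 := by
  simp [aCt, add_right_comm]

theorem bCt_cons_ab (m : ℕ) (t : List (ℕ × Col)) : bCt ((m, Col.ab) :: t) = bCt t + 1 := by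
  simp [bCt, add_right_comm]

def colPartitions (K : ℕ × Col) (u v n : ℤ) : Set (List (ℕ × Col)) :=
  {l | IsColPartition l ∧ (∀ p ∈ l, colPos p ≤ colPos K) ∧
    ((l.map Prod.fst).sum : ℤ) = n ∧ (aCt l : ℤ) = u ∧ (bCt l : ℤ) = v}

theorem dct_eq_ncard (K : ℕ × Col) (u v n : ℤ) : dct K u v n = (colPartitions K u v n).ncard :=
  Nat.card_coe_set_eq _

theorem List.finite_setOf_length_le_of_forall_mem {α : Type*} {s : Set α} (hs : s.Finite)
    (n : ℕ) :
    {l : List α | l.length ≤ n ∧ ∀ x ∈ l, x ∈ s}.Finite := by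
  have := hs.to_subtype
  refine ((List.finite_length_le s n).image (List.map Subtype.val)).subset ?_
  rintro l ⟨hl, hs⟩
  exact ⟨l.attachWith (· ∈ s) hs, by simpa using hl, by simp⟩

theorem colPartitions_finite (K : ℕ × Col) (u v n : ℤ) : (colPartitions K u v n).Finite := by
  refine (List.finite_setOf_length_le_of_forall_mem
    ((Set.finite_Iic n.toNat).prod (Set.finite_univ (α := Col))) n.toNat).subset ?_
  rintro l ⟨hl, -, hsum, -⟩
  have hpos : ∀ p ∈ l, 1 ≤ p.1 := fun p hp => (hl.1 p hp).1
  have hsum' : (l.map Prod.fst).sum = n.toNat := by omega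
  refine ⟨?_, fun p hp => ⟨?_, trivial⟩⟩
  · calc l.length = (l.map Prod.fst).length := (List.length_map _).symm
      _ ≤ (l.map Prod.fst).sum := List.length_le_sum_of_one_le _ (by simpa using hpos)
      _ = n.toNat := hsum'
  · exact hsum' ▸ List.le_sum_of_mem (List.mem_map_of_mem (f := Prod.fst) hp)

theorem colPartitions_mono {K K' : ℕ × Col} (h : colPos K ≤ colPos K') (u v n : ℤ) :
    colPartitions K u v n ⊆ colPartitions K' u v n :=
  fun _ ⟨hl, hK, rest⟩ => ⟨hl, fun p hp => (hK p hp).trans h, rest⟩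

theorem colPartitions_eq_union {K K' : ℕ × Col} (hK : IsColPart K)
    (hK' : colPos K' + 1 = colPos K) (u v n : ℤ) :
    colPartitions K u v n =
      colPartitions K' u v n ∪ (colPartitions K u v n ∩ {l | l.head? = some K}) := by
  refine subset_antisymm (fun l hl => ?_)
    (Set.union_subset (colPartitions_mono (by omega) u v n) Set.inter_subset_left)
  by_cases hhead : l.head? = some K
  · exact Or.inr ⟨hl, hhead⟩
  obtain ⟨hpart, hbound, rest⟩ := hl
  refine Or.inl ⟨hpart, fun p hp => ?_, rest⟩
  have hpK : p ≠ K := by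
    rintro rfl
    obtain ⟨x, t, rfl⟩ := List.exists_cons_of_ne_nil (List.ne_nil_of_mem hp)
    rcases List.mem_cons.1 hp with rfl | hpt
    · exact hhead rfl
    · exact (hpart.colPos_lt_of_mem p hpt).not_ge (hbound x List.mem_cons_self)
  have := mt (colPos_injOn (hpart.1 p hp) hK) hpK
  have := hbound p hp
  omega

theorem disjoint_colPartitions_head {K K' : ℕ × Col} (hK' : colPos K' < colPos K) (u v n : ℤ) :
    Disjoint (colPartitions K' u v n) {l | l.head? = some K} := by
  rw [Set.disjoint_left]
  rintro l ⟨-, hbound, -⟩ hhead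
  exact hK'.not_ge (hbound K (List.mem_of_mem_head? hhead))

theorem colPartitions_odd_ab_inter_head_eq_image {k : ℕ} (hk : 1 ≤ k) (u v n : ℤ) :
    colPartitions (2 * k + 1, Col.ab) u v n ∩ {l | l.head? = some (2 * k + 1, Col.ab)} =
      List.cons (2 * k + 1, Col.ab) ''
        colPartitions (2 * k - 1, Col.a) (u - 1) (v - 1) (n - (2 * k + 1)) := by
  have hle : colPos (2 * k - 1, Col.a) ≤ colPos (2 * k + 1, Col.ab) := by
    simp only [colPos]; omega
  ext l
  constructor
  · rintro ⟨⟨hpart, -, hsum, ha, hb⟩, hhead⟩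
    obtain ⟨t, rfl⟩ : ∃ t, l = (2 * k + 1, Col.ab) :: t := by
      cases l <;> simp_all
    have ht := (isColPartition_cons_iff.1 hpart).2.2
    refine ⟨t, ⟨ht, (isColPartition_cons_odd_ab_iff hk ht).1 hpart, ?_, ?_, ?_⟩, rfl⟩
    · rw [List.map_cons, List.sum_cons, Nat.cast_add] at hsum; omega
    · rw [aCt_cons_ab] at ha; omega
    · rw [bCt_cons_ab] at hb; omega
  · rintro ⟨t, ⟨ht, hbound, hsum, ha, hb⟩, rfl⟩
    refine ⟨⟨(isColPartition_cons_odd_ab_iff hk ht).2 hbound, ?_, ?_, ?_, ?_⟩, rfl⟩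
    · simpa using fun p hp => (hbound p hp).trans hle
    · rw [List.map_cons, List.sum_cons, Nat.cast_add]; omega
    · rw [aCt_cons_ab]; omega
    · rw [bCt_cons_ab]; omega

theorem recurrence_eqd1_general (u v k n : ℕ) (hk : 1 ≤ k) :
    dct (2*k+1, Col.ab) u v n =
      dct (2*k, Col.b) u v n +
      dct (2*k-1, Col.a) ((u : ℤ) - 1) ((v : ℤ) - 1) ((n : ℤ) - (2*k+1)) := by
  have hK := isColPart_ab (m := 2 * k + 1) (by omega)
  have hK' : colPos (2 * k, Col.b) + 1 = colPos (2 * k + 1, Col.ab) := by simp only [colPos]; omega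
  rw [dct_eq_ncard, dct_eq_ncard, dct_eq_ncard, colPartitions_eq_union hK hK',
    Set.ncard_union_eq ((disjoint_colPartitions_head (by omega) _ _ _).mono_right
      Set.inter_subset_right) (colPartitions_finite _ _ _ _)
      ((colPartitions_finite _ _ _ _).inter_of_left _),
    colPartitions_odd_ab_inter_head_eq_image hk, Set.ncard_image_of_injective _ List.cons_injective]

/-- Recurrence (3.1): d_{(2k+1)_{ab}}(u,v,n) = d_{(2k)_b}(u,v,n) + d_{(2k-1)_a}(u-1,v-1,n-2k-1). -/
theorem recurrence_eqd1 (u v k n : ℕ) (hk : 1 ≤ k) (hn : 1 ≤ n) :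
    dct (2*k+1, Col.ab) u v n =
      dct (2*k, Col.b) u v n +
      dct (2*k-1, Col.a) ((u : ℤ) - 1) ((v : ℤ) - 1) ((n : ℤ) - (2*k+1)) :=
  recurrence_eqd1_general u v k n hk
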